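/- Let $Q \subseteq \mathbb{R}^d$ be a cube, $1 \le p \le q < \infty$ with $\alpha = \frac1q + \frac1{p'}$, and let $(\omega,\sigma) \in A^{\alpha}_{p,q}(Q)$ with $\omega^q \in A_\infty(Q)$. Then there exists $0 \le \beta < \alpha$ such that $(\omega,\sigma) \in A^{\beta}_{p,q}(Q)$ with $[\omega,\sigma]_{A^{\beta}_{p,q}(Q)} \le 2\,|Q|^{\beta-\alpha}\,[\omega,\sigma]_{A^{\alpha}_{p,q}(Q)}$. -/

import Mathlib

open MeasureTheory
open scoped ENNReal NNReal

noncomputable section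

abbrev Euc (d : ℕ) := EuclideanSpace ℝ (Fin d)

structure Cube (d : ℕ) where
  center : Euc d
  side : ℝ
  side_pos : 0 < side

namespace Cube

variable {d : ℕ}

/-- A (half-open) axis-parallel cube in `ℝ^d`. -/
def toSet (Q : Cube d) : Set (Euc d) :=
  {x | ∀ i, Q.center i - Q.side / 2 ≤ x i ∧ x i < Q.center i + Q.side / 2}

/-- The volume `|Q| = ℓ(Q)^d` of a cube. -/
def vol (Q : Cube d) : ℝ := Q.side ^ d

/-- The average `⟨f⟩_Q = |Q|⁻¹ ∫_Q f`. -/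
def avg (Q : Cube d) (f : Euc d → ℝ) : ℝ := Q.vol⁻¹ * ∫ x in Q.toSet, f x

/-- The `ℝ≥0∞`-valued average of a nonnegative function. -/
def elavg (Q : Cube d) (g : Euc d → ℝ≥0∞) : ℝ≥0∞ :=
  (∫⁻ x in Q.toSet, g x) / ENNReal.ofReal Q.vol

/-- The `L^t`-average `⟨f⟩_{t,Q} = (|Q|⁻¹ ∫_Q |f|^t)^{1/t}`, with the
essential supremum when `t = ∞`. -/
def lavg (Q : Cube d) (t : ℝ≥0∞) (f : Euc d → ℝ) : ℝ≥0∞ :=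
  if t = ⊤ then essSup (fun x => ENNReal.ofReal |f x|) (volume.restrict Q.toSet)
  else ((∫⁻ x in Q.toSet, ENNReal.ofReal |f x| ^ t.toReal) / ENNReal.ofReal Q.vol) ^ (1 / t.toReal)

/-- The concentric dilation `γ Q` of a cube (only intended for `γ ≥ 1`). -/
def scale (γ : ℝ) (Q : Cube d) : Cube d :=
  ⟨Q.center, max γ 1 * Q.side,
    mul_pos (lt_of_lt_of_le one_pos (le_max_right γ 1)) Q.side_pos⟩

/-- The dyadic subcube of `Q` of generation `j` with index `k`. -/
def dyadicSub (Q : Cube d) (j : ℕ) (k : Fin d → ℕ) : Cube d where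
  center := WithLp.toLp 2 fun i => Q.center i - Q.side / 2 + ((k i : ℝ) + 1 / 2) * (Q.side / 2 ^ j)
  side := Q.side / 2 ^ j
  side_pos := div_pos Q.side_pos (by positivity)

/-- The `2ℓ(Q)`-periodic even reflection map: `reflect Q x ∈ Q` and functions
defined on `Q` are extended outside `Q` by precomposing with `reflect Q`. -/
def reflect (Q : Cube d) (x : Euc d) : Euc d := WithLp.toLp 2 fun i =>
  (Q.center i - Q.side / 2) + Q.side -
    |(x i - (Q.center i - Q.side / 2) -
        2 * Q.side * ((⌊(x i - (Q.center i - Q.side / 2)) / (2 * Q.side)⌋ : ℤ) : ℝ)) - Q.side|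

end Cube

/-- `R` is a dyadic subcube of `Q`. -/
def IsDyadicSub {d : ℕ} (Q R : Cube d) : Prop :=
  ∃ (j : ℕ) (k : Fin d → ℕ), (∀ i, k i < 2 ^ j) ∧ R = Q.dyadicSub j k

/-- A collection of cubes is sparse if each `R` carries a subset `E R ⊆ R`
with `|E R| ≥ |R|/2`, the sets `E R` being pairwise disjoint. -/
def IsSparse {d : ℕ} (𝒮 : Set (Cube d)) : Prop :=
  ∃ E : Cube d → Set (Euc d),
    (∀ R ∈ 𝒮, MeasurableSet (E R) ∧ E R ⊆ R.toSet ∧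
      ENNReal.ofReal R.vol ≤ 2 * volume (E R)) ∧
    𝒮.Pairwise fun R R' => Disjoint (E R) (E R')

/-- The Hölder conjugate `p'` of `p`, as an extended real exponent. -/
def conjE (p : ℝ) : ℝ≥0∞ := if p = 1 then ⊤ else ENNReal.ofReal (p / (p - 1))

/-- The two-weight Muckenhoupt characteristic
`[ω,σ]_{A^α_{p,q}(Q)} = sup_{R ⊆ Q} |R|^α ⟨ω⟩_{q,R} ⟨σ⁻¹⟩_{p',R}`. -/
def muck {d : ℕ} (Q : Cube d) (p q α : ℝ) (ω σ : Euc d → ℝ) : ℝ≥0∞ :=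
  ⨆ R : {R : Cube d // R.toSet ⊆ Q.toSet},
    ENNReal.ofReal (R.1.vol ^ α) * R.1.lavg (ENNReal.ofReal q) ω *
      R.1.lavg (conjE p) fun x => (σ x)⁻¹

/-- The classical Muckenhoupt `A_p` characteristic
`[w]_{A_p} = sup_Q ⟨w⟩_{1,Q} ⟨w⁻¹⟩_{1/(p-1),Q}` over all cubes in `ℝ^d`. -/
def apChar (d : ℕ) (p : ℝ) (w : Euc d → ℝ) : ℝ≥0∞ :=
  ⨆ R : Cube d,
    R.lavg 1 w * R.lavg (if p = 1 then ⊤ else ENNReal.ofReal (1 / (p - 1))) fun x => (w x)⁻¹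

/-- The localized maximal function `M(w 1_R)(x) = sup_{S ⊆ R, x ∈ S} ⟨w⟩_{1,S}`. -/
def locMaxFn {d : ℕ} (R : Cube d) (w : Euc d → ℝ) (x : Euc d) : ℝ≥0∞ :=
  ⨆ S : {S : Cube d // S.toSet ⊆ R.toSet ∧ x ∈ S.toSet}, S.1.lavg 1 w

/-- The local Fujii–Wilson `A_∞(Q)` characteristic. -/
def ainf {d : ℕ} (Q : Cube d) (w : Euc d → ℝ) : ℝ≥0∞ :=
  ⨆ R : {R : Cube d // R.toSet ⊆ Q.toSet},
    (∫⁻ x in R.1.toSet, locMaxFn R.1 w x) / ∫⁻ x in R.1.toSet, ENNReal.ofReal (w x)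

/-- The weighted norm `‖g‖_{L^p_σ(A)} = (∫_A |g|^p σ^p)^{1/p}` (weight as multiplier). -/
def wLp {d : ℕ} (A : Set (Euc d)) (p : ℝ) (σ g : Euc d → ℝ) : ℝ≥0∞ :=
  (∫⁻ x in A, ENNReal.ofReal (|g x| * σ x) ^ p) ^ (1 / p)

/-- The fractional difference quotient
`f^{s,r}_A(x) = (∫_A |f(x)-f(y)|^r / |x-y|^{d+sr} dy)^{1/r}`. -/
def fsr {d : ℕ} (A : Set (Euc d)) (s r : ℝ) (f : Euc d → ℝ) (x : Euc d) : ℝ≥0∞ :=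
  (∫⁻ y in A, ENNReal.ofReal |f x - f y| ^ r / edist x y ^ ((d : ℝ) + s * r)) ^ (1 / r)

/-- `f^{s,r}_{3R}`, where `f` is extended outside `Q` by periodic reflection. -/
def fsr3 {d : ℕ} (Q : Cube d) (s r : ℝ) (f : Euc d → ℝ) (R : Cube d) (x : Euc d) : ℝ≥0∞ :=
  fsr (Cube.scale 3 R).toSet s r (fun y => f (Q.reflect y)) x

/-- The weighted weak norm `‖g‖_{L^{q,∞}_ω(Q)}` of an `ℝ≥0∞`-valued function. -/
def weakNE {d : ℕ} (Q : Cube d) (q : ℝ) (ω : Euc d → ℝ) (g : Euc d → ℝ≥0∞) : ℝ≥0∞ :=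
  ⨆ lam : ℝ≥0, (lam : ℝ≥0∞) *
    (∫⁻ x in Q.toSet ∩ {x | (lam : ℝ≥0∞) < g x}, ENNReal.ofReal (ω x) ^ q) ^ (1 / q)

/-- The weighted weak norm `‖g‖_{L^{q,∞}_ω(Q)}` of a real valued function. -/
def weakN {d : ℕ} (Q : Cube d) (q : ℝ) (ω g : Euc d → ℝ) : ℝ≥0∞ :=
  weakNE Q q ω fun x => ENNReal.ofReal |g x|

/-- The weighted Triebel–Lizorkin seminorm `[u]_{F^{s,σ}_{p,r}(Q)}`. -/
def fSemi {d : ℕ} (Q : Cube d) (p r s : ℝ) (σ u : Euc d → ℝ) : ℝ≥0∞ :=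
  (∫⁻ x in Q.toSet, fsr Q.toSet s r u x ^ p * ENNReal.ofReal (σ x) ^ p) ^ (1 / p)

/-!
With `w = ω^q`, each term of the characteristic factors as
`|R|^{β-α} (∫_R w)^{1/q} · |R|^{1/p'} ⟨σ⁻¹⟩_{p',R}`, and the last factor grows with `R`; so it
suffices to show `|R|^{-ε} w(R)^{1/q} ≤ 2 |Q|^{-ε} w(Q)^{1/q}` for `R ⊆ Q`.

This follows from geometric decay of `w`, obtained directly from the Fujii–Wilson condition
`[w]_{A_∞(Q)} < n` (no reverse Hölder inequality is needed). If `S ⊆ R ⊆ Q` and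
`ℓ(R) ≥ 2^{4n} ℓ(S)`, squeeze cubes `T_k` of side `2^k ℓ(S)` between `S` and `R`. On the shell
`T_{k+1} \ T_k`, which fills half of `T_{k+1}`, the maximal function of `w 1_R` is at least
`w(S)/|T_{k+1}|`, so `4n w(S) ≤ 2 ∫_R M(w 1_R) ≤ 2n w(R)`, i.e. `w(S) ≤ w(R)/2`. Iterating,
`w(R) ≤ 2^{-m} w(Q)` when `ℓ(Q) ≥ 2^{4nm} ℓ(R)`, and this absorbs `|R|^{-ε}` for
`ε = 1/(4ndq)` up to a factor `2^{1/q} ≤ 2`.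
-/

lemma rpow_neg_mul_inv_two_pow_rpow_le {a b q : ℝ} {N m : ℕ} (hq : 1 ≤ q) (hN : 0 < N)
    (ha : 0 < a) (hb : 0 < b) (hab : b / a < (2 ^ N) ^ (m + 1)) :
    a ^ (-(1 / (N * q))) * ((2 : ℝ)⁻¹ ^ m) ^ (1 / q) ≤ 2 * b ^ (-(1 / (N * q))) := by
  have hq0 : 0 < q := one_pos.trans_le hq
  set η := 1 / (N * q)
  have hη : 0 < η := by positivity
  have hgrowth : (b / a) ^ η * ((2 : ℝ)⁻¹ ^ m) ^ (1 / q) ≤ 2 :=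
    calc (b / a) ^ η * ((2 : ℝ)⁻¹ ^ m) ^ (1 / q)
        ≤ (((2 : ℝ) ^ N) ^ (m + 1)) ^ η * ((2 : ℝ)⁻¹ ^ m) ^ (1 / q) := by
          gcongr
      _ = 2 ^ (1 / q) := by
          rw [← pow_mul, ← Real.rpow_natCast, ← Real.rpow_mul zero_le_two, inv_pow,
            Real.inv_rpow (by positivity), ← Real.rpow_natCast, ← Real.rpow_mul zero_le_two,
            ← Real.rpow_neg zero_le_two, ← Real.rpow_add two_pos]
          congr 1
          simp only [η]
          field_simp
          push_cast
          ring
      _ ≤ 2 ^ (1 : ℝ) := Real.rpow_le_rpow_of_exponent_le one_le_two ((div_le_one hq0).2 hq)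
      _ = 2 := Real.rpow_one 2
  calc a ^ (-η) * ((2 : ℝ)⁻¹ ^ m) ^ (1 / q)
      = (b / a) ^ η * ((2 : ℝ)⁻¹ ^ m) ^ (1 / q) * b ^ (-η) := by
        rw [Real.div_rpow hb.le ha.le, Real.rpow_neg ha.le, Real.rpow_neg hb.le]
        field_simp
    _ ≤ 2 * b ^ (-η) := by gcongr

namespace Cube

variable {d : ℕ}

def corner (R : Cube d) (i : Fin d) : ℝ := R.center i - R.side / 2

lemma vol_pos (R : Cube d) : 0 < R.vol := pow_pos R.side_pos d

lemma mem_toSet_iff {R : Cube d} {x : Euc d} :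
    x ∈ R.toSet ↔ ∀ i, R.corner i ≤ x i ∧ x i < R.corner i + R.side := by
  have hface (i : Fin d) : R.corner i + R.side = R.center i + R.side / 2 := by
    rw [corner]; ring
  simp only [hface]
  rfl

lemma toSet_subset_toSet_iff {S R : Cube d} :
    S.toSet ⊆ R.toSet ↔
      ∀ i, R.corner i ≤ S.corner i ∧ S.corner i + S.side ≤ R.corner i + R.side := by
  refine ⟨fun h i => ?_, fun h x hx => ?_⟩
  · have hlow : (WithLp.toLp 2 S.corner : Euc d) ∈ S.toSet :=
      mem_toSet_iff.2 fun j => ⟨le_rfl, lt_add_of_pos_right _ S.side_pos⟩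
    refine ⟨(mem_toSet_iff.1 (h hlow) i).1, not_lt.1 fun hlt => ?_⟩
    -- a point of `S` whose `i`-th coordinate reaches past the top face of `R`
    set v := max (S.corner i) (R.corner i + R.side)
    have hv : (WithLp.toLp 2 (Function.update S.corner i v) : Euc d) ∈ S.toSet := by
      refine mem_toSet_iff.2 fun j => ?_
      rcases eq_or_ne j i with rfl | hj
      · simp only [Function.update_self]
        exact ⟨le_max_left _ _, max_lt (lt_add_of_pos_right _ S.side_pos) hlt⟩
      · simpa [Function.update_of_ne hj] using S.side_pos
    have := (mem_toSet_iff.1 (h hv) i).2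
    simp only [Function.update_self] at this
    exact this.not_ge (le_max_right _ _)
  · exact mem_toSet_iff.2 fun i =>
      ⟨(h i).1.trans (mem_toSet_iff.1 hx i).1, (mem_toSet_iff.1 hx i).2.trans_le (h i).2⟩

lemma side_le_side_of_toSet_subset (hd : 0 < d) {S R : Cube d} (h : S.toSet ⊆ R.toSet) :
    S.side ≤ R.side := by
  have := toSet_subset_toSet_iff.1 h ⟨0, hd⟩
  linarith

lemma toSet_eq_preimage (R : Cube d) :
    R.toSet = (MeasurableEquiv.toLp 2 (Fin d → ℝ)).symm ⁻¹'
      Set.univ.pi fun i => Set.Ico (R.corner i) (R.corner i + R.side) := by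
  ext x
  simp only [mem_toSet_iff, Set.mem_preimage, Set.mem_univ_pi, Set.mem_Ico]
  rfl

lemma measurableSet_toSet (R : Cube d) : MeasurableSet R.toSet := by
  rw [toSet_eq_preimage]
  exact (MeasurableEquiv.toLp 2 (Fin d → ℝ)).symm.measurable
    (MeasurableSet.univ_pi fun _ => measurableSet_Ico)

lemma volume_toSet (R : Cube d) : volume R.toSet = ENNReal.ofReal R.vol := by
  rw [toSet_eq_preimage,
    (EuclideanSpace.volume_preserving_symm_measurableEquiv_toLp (Fin d)).measure_preimage
      (MeasurableSet.univ_pi fun _ => measurableSet_Ico).nullMeasurableSet,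
    volume_pi_pi]
  simp only [Real.volume_Ico, add_sub_cancel_left, Finset.prod_const, Finset.card_univ,
    Fintype.card_fin, vol, ENNReal.ofReal_pow R.side_pos.le]

lemma ofReal_vol_le_two_mul_volume_diff (hd : 0 < d) {S T : Cube d}
    (hST : S.toSet ⊆ T.toSet) (hside : 2 * S.side ≤ T.side) :
    ENNReal.ofReal T.vol ≤ 2 * volume (T.toSet \ S.toSet) := by
  have hvol : 2 * S.vol ≤ T.vol :=
    calc 2 * S.vol ≤ 2 ^ d * S.side ^ d :=
          mul_le_mul_of_nonneg_right (le_self_pow₀ one_le_two hd.ne') (vol_pos S).le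
      _ = (2 * S.side) ^ d := (mul_pow _ _ _).symm
      _ ≤ T.vol := pow_le_pow_left₀ (by linarith [S.side_pos]) hside d
  rw [measure_sdiff hST (measurableSet_toSet S).nullMeasurableSet (by simp [volume_toSet]),
    volume_toSet, volume_toSet, ← ENNReal.ofReal_sub _ (vol_pos S).le,
    ← ENNReal.ofReal_ofNat 2, ← ENNReal.ofReal_mul zero_le_two]
  exact ENNReal.ofReal_le_ofReal (by linarith)

section hull

/-- A cube of side `ℓ` squeezed between `S ⊆ R` when `ℓ(S) ≤ ℓ ≤ ℓ(R)`. -/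
def hull (S R : Cube d) (ℓ : ℝ) (hℓ : 0 < ℓ) : Cube d :=
  ⟨WithLp.toLp 2 fun i => min (S.corner i) (R.corner i + R.side - ℓ) + ℓ / 2, ℓ, hℓ⟩

variable {S R : Cube d} {ℓ ℓ' : ℝ}

@[simp]
lemma side_hull (hℓ : 0 < ℓ) : (hull S R ℓ hℓ).side = ℓ := rfl

lemma corner_hull (hℓ : 0 < ℓ) (i : Fin d) :
    (hull S R ℓ hℓ).corner i = min (S.corner i) (R.corner i + R.side - ℓ) := by
  simp [hull, corner]

lemma toSet_subset_hull (h : S.toSet ⊆ R.toSet) (hℓ : 0 < ℓ) (hS : S.side ≤ ℓ) :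
    S.toSet ⊆ (hull S R ℓ hℓ).toSet := by
  refine toSet_subset_toSet_iff.2 fun i => ?_
  have := toSet_subset_toSet_iff.1 h i
  rw [corner_hull, side_hull]
  constructor
  · exact min_le_left _ _
  · rcases le_total (S.corner i) (R.corner i + R.side - ℓ) with hm | hm
    · rw [min_eq_left hm]; linarith
    · rw [min_eq_right hm]; linarith

lemma hull_subset_toSet (h : S.toSet ⊆ R.toSet) (hℓ : 0 < ℓ) (hR : ℓ ≤ R.side) :
    (hull S R ℓ hℓ).toSet ⊆ R.toSet := by
  refine toSet_subset_toSet_iff.2 fun i => ?_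
  have := toSet_subset_toSet_iff.1 h i
  rw [corner_hull, side_hull]
  constructor
  · exact le_min this.1 (by linarith)
  · linarith [min_le_right (S.corner i) (R.corner i + R.side - ℓ)]

lemma hull_subset_hull (hℓ : 0 < ℓ) (hℓ' : 0 < ℓ') (hle : ℓ ≤ ℓ') :
    (hull S R ℓ hℓ).toSet ⊆ (hull S R ℓ' hℓ').toSet := by
  refine toSet_subset_toSet_iff.2 fun i => ?_
  rw [corner_hull, corner_hull, side_hull, side_hull]
  constructor
  · exact min_le_min le_rfl (by linarith)
  · rcases le_total (S.corner i) (R.corner i + R.side - ℓ') with hm | hm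
    · rw [min_eq_left hm]
      linarith [min_le_left (S.corner i) (R.corner i + R.side - ℓ)]
    · rw [min_eq_right hm]
      linarith [min_le_right (S.corner i) (R.corner i + R.side - ℓ)]

end hull

section mass

variable {w : Euc d → ℝ}

def mass (R : Cube d) (w : Euc d → ℝ) : ℝ≥0∞ := ∫⁻ x in R.toSet, ENNReal.ofReal (w x)

lemma mass_mono (w : Euc d → ℝ) {S R : Cube d} (h : S.toSet ⊆ R.toSet) : S.mass w ≤ R.mass w :=
  lintegral_mono_set h

lemma lavg_one_eq_mass_div (hw : ∀ x, 0 ≤ w x) (R : Cube d) :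
    R.lavg 1 w = R.mass w / ENNReal.ofReal R.vol := by
  simp only [lavg, ENNReal.one_ne_top, if_false, ENNReal.toReal_one, ENNReal.rpow_one, div_one,
    mass, abs_of_nonneg (hw _)]

lemma mass_div_vol_le_locMaxFn (hw : ∀ x, 0 ≤ w x) {S T R : Cube d} (hST : S.toSet ⊆ T.toSet)
    (hTR : T.toSet ⊆ R.toSet) {x : Euc d} (hx : x ∈ T.toSet) :
    S.mass w / ENNReal.ofReal T.vol ≤ locMaxFn R w x := by
  calc S.mass w / ENNReal.ofReal T.vol ≤ T.lavg 1 w := by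
        rw [lavg_one_eq_mass_div hw]
        exact ENNReal.div_le_div_right (mass_mono w hST) _
    _ ≤ locMaxFn R w x :=
        le_iSup (fun T' : {T' : Cube d // T'.toSet ⊆ R.toSet ∧ x ∈ T'.toSet} => T'.1.lavg 1 w)
          ⟨T, hTR, hx⟩

lemma mass_le_two_mul_setLIntegral_locMaxFn (hd : 0 < d) (hw : ∀ x, 0 ≤ w x)
    {S T T' R : Cube d} (hST' : S.toSet ⊆ T'.toSet) (hTT' : T.toSet ⊆ T'.toSet)
    (hT'R : T'.toSet ⊆ R.toSet) (hside : 2 * T.side ≤ T'.side) :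
    S.mass w ≤ 2 * ∫⁻ x in T'.toSet \ T.toSet, locMaxFn R w x := by
  set c := S.mass w / ENNReal.ofReal T'.vol
  have hshell : MeasurableSet (T'.toSet \ T.toSet) :=
    (measurableSet_toSet T').diff (measurableSet_toSet T)
  calc S.mass w = c * ENNReal.ofReal T'.vol :=
        (ENNReal.div_mul_cancel (ENNReal.ofReal_pos.2 (vol_pos T')).ne'
          ENNReal.ofReal_ne_top).symm
    _ ≤ c * (2 * volume (T'.toSet \ T.toSet)) :=
        mul_le_mul_right (ofReal_vol_le_two_mul_volume_diff hd hTT' hside) c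
    _ = 2 * ∫⁻ _ in T'.toSet \ T.toSet, c := by
        rw [setLIntegral_const]; ring
    _ ≤ 2 * ∫⁻ x in T'.toSet \ T.toSet, locMaxFn R w x :=
        mul_le_mul_right (setLIntegral_mono' hshell fun x hx =>
          mass_div_vol_le_locMaxFn hw hST' hT'R hx.1) 2

lemma nat_mul_mass_le_two_mul_lintegral_locMaxFn (hd : 0 < d) (hw : ∀ x, 0 ≤ w x)
    {S R : Cube d} (hSR : S.toSet ⊆ R.toSet) {N : ℕ} (hside : S.side * 2 ^ N ≤ R.side) :
    N * S.mass w ≤ 2 * ∫⁻ x in R.toSet, locMaxFn R w x := by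
  have hℓ (k : ℕ) : 0 < 2 ^ k * S.side := by positivity [S.side_pos]
  set T : ℕ → Cube d := fun k => hull S R (2 ^ k * S.side) (hℓ k)
  have hmono (k : ℕ) : (T k).toSet ⊆ (T (k + 1)).toSet :=
    hull_subset_hull _ _ (by gcongr; exacts [S.side_pos.le, one_le_two, k.le_succ])
  have hTR {k : ℕ} (hk : k ≤ N) : (T k).toSet ⊆ R.toSet :=
    hull_subset_toSet hSR _ (by
      calc 2 ^ k * S.side ≤ 2 ^ N * S.side := by gcongr; exacts [S.side_pos.le, one_le_two]
        _ ≤ R.side := by linarith)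
  have hshells : ∀ k ≤ N, k * S.mass w ≤ 2 * ∫⁻ x in (T k).toSet, locMaxFn R w x := by
    intro k
    induction k with
    | zero => simp
    | succ k ih =>
      intro hk
      have hST : S.toSet ⊆ (T (k + 1)).toSet :=
        toSet_subset_hull hSR _ (le_mul_of_one_le_left S.side_pos.le (one_le_pow₀ one_le_two))
      rw [← Set.union_sdiff_cancel (hmono k), lintegral_union
        ((measurableSet_toSet _).diff (measurableSet_toSet _)) Set.disjoint_sdiff_right,
        mul_add, Nat.cast_succ, add_mul, one_mul]
      exact add_le_add (ih (by omega)) (mass_le_two_mul_setLIntegral_locMaxFn hd hw hST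
        (hmono k) (hTR hk) (by simp only [T, side_hull, pow_succ]; linarith))
  calc (N : ℝ≥0∞) * S.mass w ≤ 2 * ∫⁻ x in (T N).toSet, locMaxFn R w x := hshells N le_rfl
    _ ≤ 2 * ∫⁻ x in R.toSet, locMaxFn R w x := by gcongr; exact hTR le_rfl

lemma lintegral_locMaxFn_le_mul_mass {Q R : Cube d} (hRQ : R.toSet ⊆ Q.toSet) {c : ℝ≥0∞}
    (hA : ainf Q w ≤ c) (hc : c ≠ 0) (hc' : c ≠ ⊤) :
    ∫⁻ x in R.toSet, locMaxFn R w x ≤ c * R.mass w := by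
  refine (ENNReal.div_le_iff_le_mul (Or.inr hc') (Or.inr hc)).1 (le_trans ?_ hA)
  exact le_iSup (fun R' : {R' : Cube d // R'.toSet ⊆ Q.toSet} =>
    (∫⁻ x in R'.1.toSet, locMaxFn R'.1 w x) / R'.1.mass w) ⟨R, hRQ⟩

lemma mass_le_half_of_side_mul_le (hd : 0 < d) (hw : ∀ x, 0 ≤ w x) {Q : Cube d} {n : ℕ}
    (hn : 0 < n) (hA : ainf Q w ≤ n) {S R : Cube d} (hSR : S.toSet ⊆ R.toSet)
    (hRQ : R.toSet ⊆ Q.toSet) (hside : S.side * 2 ^ (4 * n) ≤ R.side) :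
    S.mass w ≤ R.mass w / 2 := by
  have hn0 : (n : ℝ≥0∞) ≠ 0 := by exact_mod_cast hn.ne'
  have h := (nat_mul_mass_le_two_mul_lintegral_locMaxFn hd hw hSR hside).trans
    (mul_le_mul_right (lintegral_locMaxFn_le_mul_mass hRQ hA hn0 (ENNReal.natCast_ne_top n)) 2)
  rw [ENNReal.le_div_iff_mul_le (Or.inl two_ne_zero) (Or.inl ENNReal.ofNat_ne_top),
    ← ENNReal.mul_le_mul_iff_right (a := 2 * n) (by simp [hn0])
      (ENNReal.mul_ne_top ENNReal.ofNat_ne_top (ENNReal.natCast_ne_top n))]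
  calc 2 * n * (S.mass w * 2) = ((4 * n : ℕ) : ℝ≥0∞) * S.mass w := by push_cast; ring
    _ ≤ 2 * (n * R.mass w) := h
    _ = 2 * n * R.mass w := by ring

lemma mass_le_inv_two_pow_mul_mass (hd : 0 < d) (hw : ∀ x, 0 ≤ w x) {Q : Cube d} {n : ℕ}
    (hn : 0 < n) (hA : ainf Q w ≤ n) (m : ℕ) {S : Cube d} (hSQ : S.toSet ⊆ Q.toSet)
    (hside : S.side * (2 ^ (4 * n)) ^ m ≤ Q.side) :
    S.mass w ≤ 2⁻¹ ^ m * Q.mass w := by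
  induction m generalizing S with
  | zero => simpa using mass_mono w hSQ
  | succ m ih =>
    have hℓ : 0 < 2 ^ (4 * n) * S.side := by positivity [S.side_pos]
    have hside' : 2 ^ (4 * n) * S.side * (2 ^ (4 * n)) ^ m ≤ Q.side := by
      rw [pow_succ] at hside; linarith
    have hRQ : (hull S Q _ hℓ).toSet ⊆ Q.toSet := hull_subset_toSet hSQ hℓ
      ((le_mul_of_one_le_right hℓ.le (one_le_pow₀ (one_le_pow₀ one_le_two))).trans hside')
    have hSR : S.toSet ⊆ (hull S Q _ hℓ).toSet :=
      toSet_subset_hull hSQ hℓ (le_mul_of_one_le_left S.side_pos.le (one_le_pow₀ one_le_two))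
    calc S.mass w ≤ (hull S Q _ hℓ).mass w / 2 :=
          mass_le_half_of_side_mul_le hd hw hn hA hSR hRQ (by rw [side_hull, mul_comm])
      _ ≤ 2⁻¹ ^ m * Q.mass w / 2 := by gcongr; exact ih hRQ hside'
      _ = 2⁻¹ ^ (m + 1) * Q.mass w := by
          rw [div_eq_mul_inv, pow_succ]; ring


lemma vol_rpow_neg (R : Cube d) (ε : ℝ) : R.vol ^ (-ε) = R.side ^ (-(d * ε)) := by
  rw [vol, ← Real.rpow_natCast, ← Real.rpow_mul R.side_pos.le, mul_neg]

lemma ofReal_vol_rpow_mul_mass_rpow_le (hd : 0 < d) {q : ℝ} (hq : 1 ≤ q) (hw : ∀ x, 0 ≤ w x)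
    {Q : Cube d} {n : ℕ} (hn : 0 < n) (hA : ainf Q w ≤ n) {R : Cube d}
    (hRQ : R.toSet ⊆ Q.toSet) :
    ENNReal.ofReal (R.vol ^ (-(1 / (4 * n * d * q)))) * R.mass w ^ (1 / q) ≤
      2 * ENNReal.ofReal (Q.vol ^ (-(1 / (4 * n * d * q)))) * Q.mass w ^ (1 / q) := by
  have hq0 : 0 < q := one_pos.trans_le hq
  have hexp : (d : ℝ) * (1 / (4 * n * d * q)) = 1 / ((4 * n : ℕ) * q) := by
    push_cast; field_simp
  obtain ⟨m, hm, hm'⟩ := exists_nat_pow_near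
    ((one_le_div R.side_pos).2 (side_le_side_of_toSet_subset hd hRQ))
    (one_lt_pow₀ one_lt_two (by omega : 4 * n ≠ 0))
  have hdecay := mass_le_inv_two_pow_mul_mass hd hw hn hA m hRQ
    (by rwa [le_div_iff₀ R.side_pos, mul_comm] at hm)
  have hscalar := rpow_neg_mul_inv_two_pow_rpow_le hq (by omega) R.side_pos Q.side_pos hm'
  rw [← hexp, ← vol_rpow_neg, ← vol_rpow_neg] at hscalar
  calc ENNReal.ofReal (R.vol ^ (-(1 / (4 * n * d * q)))) * R.mass w ^ (1 / q)
      ≤ ENNReal.ofReal (R.vol ^ (-(1 / (4 * n * d * q)))) *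
          (ENNReal.ofReal (((2 : ℝ)⁻¹ ^ m) ^ (1 / q)) * Q.mass w ^ (1 / q)) := by
        gcongr
        rw [← ENNReal.ofReal_rpow_of_nonneg (by positivity) (by positivity),
          ← ENNReal.mul_rpow_of_nonneg _ _ (by positivity)]
        gcongr
        rwa [ENNReal.ofReal_pow (by norm_num), ENNReal.ofReal_inv_of_pos two_pos,
          ENNReal.ofReal_ofNat]
    _ = ENNReal.ofReal (R.vol ^ (-(1 / (4 * n * d * q))) * ((2 : ℝ)⁻¹ ^ m) ^ (1 / q)) *
          Q.mass w ^ (1 / q) := by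
        rw [ENNReal.ofReal_mul (by positivity [R.vol_pos])]
        ring
    _ ≤ 2 * ENNReal.ofReal (Q.vol ^ (-(1 / (4 * n * d * q)))) * Q.mass w ^ (1 / q) := by
        gcongr
        rw [← ENNReal.ofReal_ofNat 2, ← ENNReal.ofReal_mul zero_le_two]
        exact ENNReal.ofReal_le_ofReal hscalar

end mass

lemma ofReal_vol_rpow_mul_lavg (R : Cube d) {r : ℝ} (hr : 0 < r) (f : Euc d → ℝ) :
    ENNReal.ofReal (R.vol ^ (1 / r)) * R.lavg (ENNReal.ofReal r) f =
      (∫⁻ x in R.toSet, ENNReal.ofReal |f x| ^ r) ^ (1 / r) := by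
  rw [lavg, if_neg ENNReal.ofReal_ne_top, ENNReal.toReal_ofReal hr.le,
    ← ENNReal.ofReal_rpow_of_pos (vol_pos R), ← ENNReal.mul_rpow_of_nonneg _ _ (by positivity),
    ENNReal.mul_div_cancel (ENNReal.ofReal_pos.2 (vol_pos R)).ne' ENNReal.ofReal_ne_top]

/-- `|R|^{1/p'} ⟨f⟩_{p',R}` is the `L^{p'}(R)` norm of `f`, hence grows with `R`. -/
lemma ofReal_vol_rpow_mul_lavg_conjE_mono {p : ℝ} (hp : 1 ≤ p) (f : Euc d → ℝ)
    {S R : Cube d} (h : S.toSet ⊆ R.toSet) :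
    ENNReal.ofReal (S.vol ^ (1 - 1 / p)) * S.lavg (conjE p) f ≤
      ENNReal.ofReal (R.vol ^ (1 - 1 / p)) * R.lavg (conjE p) f := by
  rcases hp.eq_or_lt with rfl | hp1
  · simp only [conjE, lavg, if_true, div_one, sub_self, Real.rpow_zero, ENNReal.ofReal_one,
      one_mul]
    exact essSup_mono_measure (Measure.absolutelyContinuous_of_le (Measure.restrict_mono h le_rfl))
  · have hr : 0 < p / (p - 1) := div_pos (by linarith) (by linarith)
    have hexp : 1 - 1 / p = 1 / (p / (p - 1)) := by field_simp
    rw [conjE, if_neg hp1.ne', hexp, ofReal_vol_rpow_mul_lavg S hr, ofReal_vol_rpow_mul_lavg R hr]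
    gcongr

lemma ofReal_vol_rpow_mul_lavg_mul_lavg_eq {p q : ℝ} (hq : 0 < q) {ω : Euc d → ℝ}
    (hω : ∀ x, 0 ≤ ω x) (g : Euc d → ℝ) (β : ℝ) (R : Cube d) :
    ENNReal.ofReal (R.vol ^ β) * R.lavg (ENNReal.ofReal q) ω * R.lavg (conjE p) g =
      ENNReal.ofReal (R.vol ^ (β - (1 / q + (1 - 1 / p)))) *
        R.mass (fun x => ω x ^ q) ^ (1 / q) *
          (ENNReal.ofReal (R.vol ^ (1 - 1 / p)) * R.lavg (conjE p) g) := by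
  have hvol : 0 ≤ R.vol := (vol_pos R).le
  have hsplit : ENNReal.ofReal (R.vol ^ β) = ENNReal.ofReal (R.vol ^ (β - (1 / q + (1 - 1 / p)))) *
      ENNReal.ofReal (R.vol ^ (1 / q)) * ENNReal.ofReal (R.vol ^ (1 - 1 / p)) := by
    rw [← ENNReal.ofReal_mul (by positivity), ← ENNReal.ofReal_mul (by positivity),
      ← Real.rpow_add (vol_pos R), ← Real.rpow_add (vol_pos R)]
    ring_nf
  have hmass : ENNReal.ofReal (R.vol ^ (1 / q)) * R.lavg (ENNReal.ofReal q) ω =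
      R.mass (fun x => ω x ^ q) ^ (1 / q) := by
    rw [ofReal_vol_rpow_mul_lavg R hq, mass]
    simp only [abs_of_nonneg (hω _), ENNReal.ofReal_rpow_of_nonneg (hω _) hq.le]
  rw [hsplit, ← hmass]
  ring

lemma muck_le_of_forall_mass_le {p q : ℝ} (hp : 1 ≤ p) (hq : 0 < q) {ω : Euc d → ℝ}
    (hω : ∀ x, 0 ≤ ω x) (σ : Euc d → ℝ) {Q : Cube d} {β : ℝ} {C : ℝ≥0∞}
    (h : ∀ R : Cube d, R.toSet ⊆ Q.toSet →
      ENNReal.ofReal (R.vol ^ (β - (1 / q + (1 - 1 / p)))) *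
          R.mass (fun x => ω x ^ q) ^ (1 / q) ≤
        C * ENNReal.ofReal (Q.vol ^ (β - (1 / q + (1 - 1 / p)))) *
          Q.mass (fun x => ω x ^ q) ^ (1 / q)) :
    muck Q p q β ω σ ≤
      C * ENNReal.ofReal (Q.vol ^ (β - (1 / q + (1 - 1 / p)))) *
        muck Q p q (1 / q + (1 - 1 / p)) ω σ := by
  set α := 1 / q + (1 - 1 / p)
  set G : Cube d → ℝ≥0∞ := fun R =>
    ENNReal.ofReal (R.vol ^ (1 - 1 / p)) * R.lavg (conjE p) fun x => (σ x)⁻¹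
  have hQ : Q.mass (fun x => ω x ^ q) ^ (1 / q) * G Q ≤ muck Q p q α ω σ := by
    have := le_iSup (fun R : {R : Cube d // R.toSet ⊆ Q.toSet} =>
      ENNReal.ofReal (R.1.vol ^ α) * R.1.lavg (ENNReal.ofReal q) ω *
        R.1.lavg (conjE p) fun x => (σ x)⁻¹) ⟨Q, subset_rfl⟩
    rwa [ofReal_vol_rpow_mul_lavg_mul_lavg_eq hq hω, sub_self, Real.rpow_zero,
      ENNReal.ofReal_one, one_mul] at this
  refine iSup_le fun ⟨R, hRQ⟩ => ?_
  calc ENNReal.ofReal (R.vol ^ β) * R.lavg (ENNReal.ofReal q) ω * R.lavg (conjE p) _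
      = ENNReal.ofReal (R.vol ^ (β - α)) * R.mass (fun x => ω x ^ q) ^ (1 / q) * G R :=
        ofReal_vol_rpow_mul_lavg_mul_lavg_eq hq hω _ β R
    _ ≤ C * ENNReal.ofReal (Q.vol ^ (β - α)) * Q.mass (fun x => ω x ^ q) ^ (1 / q) * G Q :=
        mul_le_mul' (h R hRQ) (ofReal_vol_rpow_mul_lavg_conjE_mono hp _ hRQ)
    _ ≤ C * ENNReal.ofReal (Q.vol ^ (β - α)) * muck Q p q α ω σ := by
        rw [mul_assoc _ (Q.mass _ ^ _)]
        gcongr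

lemma muck_eq_of_dim_zero (Q : Cube 0) (p q β α : ℝ) (ω σ : Euc 0 → ℝ) :
    muck Q p q β ω σ = muck Q p q α ω σ := by
  simp only [muck, vol, pow_zero, Real.one_rpow]

end Cube

open Cube

theorem muck_improve_general (d : ℕ) (Q : Cube d) (p q : ℝ)
    (hp : 1 ≤ p) (hpq : p ≤ q)
    (ω σ : Euc d → ℝ) (hω : ∀ x, 0 < ω x)
    (hA : muck Q p q (1 / q + (1 - 1 / p)) ω σ ≠ ⊤)
    (hAinf : ainf Q (fun x => ω x ^ q) ≠ ⊤) :
    ∃ β : ℝ, 0 ≤ β ∧ β < 1 / q + (1 - 1 / p) ∧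
      muck Q p q β ω σ ≤
        2 * ENNReal.ofReal (Q.vol ^ (β - (1 / q + (1 - 1 / p)))) *
          muck Q p q (1 / q + (1 - 1 / p)) ω σ ∧
      muck Q p q β ω σ ≠ ⊤ := by
  have hq : 1 ≤ q := hp.trans hpq
  have hq0 : 0 < q := one_pos.trans_le hq
  have hα : 1 / q ≤ 1 / q + (1 - 1 / p) :=
    le_add_of_nonneg_right (sub_nonneg.2 ((div_le_one (one_pos.trans_le hp)).2 hp))
  rcases Nat.eq_zero_or_pos d with rfl | hd
  · refine ⟨0, le_rfl, (one_div_pos.2 hq0).trans_le hα, ?_, ?_⟩ <;>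
      rw [muck_eq_of_dim_zero Q p q 0 (1 / q + (1 - 1 / p))]
    · rw [vol, pow_zero, Real.one_rpow, ENNReal.ofReal_one, mul_one]
      exact le_mul_of_one_le_left' one_le_two
    · exact hA
  obtain ⟨n, hAn⟩ := ENNReal.exists_nat_gt hAinf
  have hn : 0 < n := by exact_mod_cast pos_of_gt hAn
  set ε : ℝ := 1 / (4 * n * d * q)
  have hε : 0 < ε := by positivity
  have hεα : ε ≤ 1 / q + (1 - 1 / p) := by
    refine le_trans (one_div_le_one_div_of_le hq0 (le_mul_of_one_le_left hq0.le ?_)) hα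
    exact_mod_cast Nat.mul_pos (Nat.mul_pos four_pos hn) hd
  have hbound := muck_le_of_forall_mass_le hp hq0 (fun x => (hω x).le) σ
    (β := 1 / q + (1 - 1 / p) - ε) (C := 2) fun R hRQ => by
      rw [sub_sub_cancel_left]
      exact ofReal_vol_rpow_mul_mass_rpow_le hd hq (fun x => Real.rpow_nonneg (hω x).le q) hn
        hAn.le hRQ
  refine ⟨_, sub_nonneg.2 hεα, sub_lt_self _ hε, hbound, ne_top_of_le_ne_top ?_ hbound⟩
  exact ENNReal.mul_ne_top (ENNReal.mul_ne_top ENNReal.ofNat_ne_top ENNReal.ofReal_ne_top) hA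

/-- If `α = 1/q + 1/p'`, `(ω,σ) ∈ A^α_{p,q}(Q)` and `ω^q ∈ A_∞(Q)`,
then there is `0 ≤ β < α` with `(ω,σ) ∈ A^β_{p,q}(Q)` and
`[ω,σ]_{A^β_{p,q}(Q)} ≤ 2 |Q|^{β-α} [ω,σ]_{A^α_{p,q}(Q)}`. -/
theorem muck_improve (d : ℕ) (Q : Cube d) (p q : ℝ)
    (hp : 1 ≤ p) (hpq : p ≤ q)
    (ω σ : Euc d → ℝ) (hω : ∀ x, 0 < ω x) (hσ : ∀ x, 0 < σ x)
    (hωm : Measurable ω) (hσm : Measurable σ)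
    (hA : muck Q p q (1 / q + (1 - 1 / p)) ω σ ≠ ⊤)
    (hAinf : ainf Q (fun x => ω x ^ q) ≠ ⊤) :
    ∃ β : ℝ, 0 ≤ β ∧ β < 1 / q + (1 - 1 / p) ∧
      muck Q p q β ω σ ≤
        2 * ENNReal.ofReal (Q.vol ^ (β - (1 / q + (1 - 1 / p)))) *
          muck Q p q (1 / q + (1 - 1 / p)) ω σ ∧
      muck Q p q β ω σ ≠ ⊤ :=
  muck_improve_general d Q p q hp hpq ω σ hω hA hAinf
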